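/- arXiv:2411.17577 — 2 statements merged into one kernel-verified Lean document; each statement's English description precedes it below -/
import Mathlib

section
/- Let q ∈ (0,1), let n be a positive integer, let p be a prime, and let m ≥ 1 be such that p^m divides n. Then P_q(p^m, n) = (∑_{k=0}^{n/p^m} φ_q(k, n/p^m)^p)^{p^{m−1}}. -/
open Finset

/-- The binomial probability mass function. -/
noncomputable def phi (q : ℝ) (k n : ℕ) : ℝ :=
  (n.choose k : ℝ) * q ^ k * (1 - q) ^ (n - k)

/-- The Bernoulli(q) probability weight of an outcome `c : Fin n → Bool`. -/
noncomputable def bernWeight (q : ℝ) (n : ℕ) (c : Fin n → Bool) : ℝ :=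
  q ^ (Finset.univ.filter (fun j => c j = true)).card *
    (1 - q) ^ (n - (Finset.univ.filter (fun j => c j = true)).card)

/-- Probability that the random 0/1 polynomial ∑_j c_j x^j of degree < n (with i.i.d.
Bernoulli(q) coefficients) vanishes at the primitive d-th root of unity exp(2πi/d),
i.e. that it is divisible by the d-th cyclotomic polynomial. -/
noncomputable def Pqd (q : ℝ) (d n : ℕ) : ℝ :=
  ∑ c : Fin n → Bool,
    if (∑ j : Fin n,
          (if c j then (1 : ℂ) else 0) *
            Complex.exp (2 * Real.pi * Complex.I / d) ^ (j : ℕ)) = 0 then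
      bernWeight q n c
    else 0

/-! Write `p ^ m = a * p` with `a = p ^ (m - 1)` and `n = p ^ m * M`. Since `ζ ^ (p ^ m) = 1`, the
value `∑ c_j ζ^j` only depends on the counts `N_r = #{u | c (r + p ^ m * u)}` for `r < p ^ m`;
writing `r = s + a * t` with `s < a`, `t < p` it is `∑ N_{s,t} ζ^(s + a t)`. As
`Φ_{p^m}(x) = ∑_{t < p} x^(a t)` has degree `a (p - 1)`, this vanishes iff `N_{s,t}` does not
depend on `t`. The event thus splits into `a` independent events, one per residue `s`, each
asking that `p` independent Binomial(`M`, `q`) counts agree, which has probability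
`∑_k φ_q(k, M) ^ p`. -/

def numTrue {ι : Type*} [Fintype ι] (c : ι → Bool) : ℕ := #{j | c j = true}

lemma numTrue_le {ι : Type*} [Fintype ι] (c : ι → Bool) : numTrue c ≤ Fintype.card ι :=
  card_filter_le _ _

lemma bernWeight_eq_prod (q : ℝ) (n : ℕ) (c : Fin n → Bool) :
    bernWeight q n c = ∏ j, if c j then q else 1 - q := by
  have hcard := card_filter_add_card_filter_not (s := univ) (fun j => c j = true)
  rw [prod_ite, prod_const, prod_const, bernWeight]
  congr 2
  simp only [card_univ, Fintype.card_fin] at hcard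
  omega

lemma card_filter_numTrue_eq {ι : Type*} [Fintype ι] [DecidableEq ι] (k : ℕ) :
    #{c : ι → Bool | numTrue c = k} = (Fintype.card ι).choose k := by
  rw [← card_univ, ← card_powersetCard]
  refine card_nbij' (fun c => ({j | c j = true} : Finset ι)) (fun s j => decide (j ∈ s))
    ?_ ?_ ?_ ?_
  · intro c hc; simpa [mem_powersetCard, numTrue] using (mem_filter.mp (mem_coe.mp hc)).2
  · intro s hs
    rw [mem_coe, mem_filter]
    simpa [numTrue] using (mem_powersetCard.mp (mem_coe.mp hs)).2
  · intro c _; ext j; simp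
  · intro s _; ext j; simp

lemma sum_bernWeight_numTrue_eq_phi (q : ℝ) (M k : ℕ) :
    ∑ h : Fin M → Bool with numTrue h = k, bernWeight q M h = phi q k M := by
  rw [sum_congr rfl fun h hh => by rw [bernWeight, ← numTrue, (mem_filter.mp hh).2],
    sum_const, card_filter_numTrue_eq, Fintype.card_fin, nsmul_eq_mul, phi, mul_assoc]

lemma sum_pi_ite_level_const_eq_sum_pow {ι α β R : Type*} [Fintype ι] [DecidableEq ι]
    [Nonempty ι] [Fintype α] [DecidableEq β] [CommSemiring R] (κ : α → β) (f : α → R)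
    (S : Finset β) (hS : ∀ x, κ x ∈ S)
    [DecidablePred fun g : ι → α => ∀ t t', κ (g t) = κ (g t')] :
    ∑ g : ι → α, (if ∀ t t', κ (g t) = κ (g t') then ∏ t, f (g t) else 0) =
      ∑ k ∈ S, (∑ x with κ x = k, f x) ^ Fintype.card ι := by
  obtain ⟨t₀⟩ := ‹Nonempty ι›
  have hlevel : ∀ g : ι → α,
      (if ∀ t t', κ (g t) = κ (g t') then ∏ t, f (g t) else 0) =
        ∑ k ∈ S, if ∀ t, κ (g t) = k then ∏ t, f (g t) else 0 := by
    intro g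
    have hiff : ∀ k, (∀ t, κ (g t) = k) ↔
        k = κ (g t₀) ∧ ∀ t t', κ (g t) = κ (g t') := fun k =>
      ⟨fun h => ⟨(h t₀).symm, fun t t' => (h t).trans (h t').symm⟩,
        fun ⟨hk, h⟩ t => hk ▸ h t t₀⟩
    simp only [hiff, ite_and, sum_ite_eq' S, if_pos (hS _)]
  rw [sum_congr rfl fun g _ => hlevel g, sum_comm]
  refine sum_congr rfl fun k _ => ?_
  rw [sum_filter, ← card_univ, ← prod_const, Fintype.prod_sum]
  exact sum_congr rfl fun g _ => Fintype.prod_ite_zero.symm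

lemma Pqd_mul_eq_sum_fold {ι : Type*} [Fintype ι] [DecidableEq ι] (q : ℝ) (d M : ℕ)
    (e : ι ≃ Fin d) :
    Pqd q d (d * M) = ∑ c : ι → Fin M → Bool,
      if ∑ i, (numTrue (c i) : ℂ) * Complex.exp (2 * Real.pi * Complex.I / d) ^ (e i : ℕ) = 0
      then ∏ i, bernWeight q M (c i) else 0 := by
  set ζ := Complex.exp (2 * Real.pi * Complex.I / d)
  have hζ : ∀ r u : ℕ, ζ ^ (r + d * u) = ζ ^ r := by
    rcases eq_or_ne d 0 with rfl | hd
    · simp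
    · intro r u
      rw [pow_add, pow_mul, (Complex.isPrimitiveRoot_exp d hd).pow_eq_one, one_pow, mul_one]
  let E : ι × Fin M ≃ Fin (d * M) := (Equiv.prodComm _ _).trans <|
    (Equiv.prodCongr (Equiv.refl _) e).trans <| finProdFinEquiv.trans (finCongr (mul_comm M d))
  have hE : ∀ x, (E x : ℕ) = e x.1 + d * x.2 := fun x => by simp [E]
  let T : (ι → Fin M → Bool) ≃ (Fin (d * M) → Bool) :=
    (Equiv.curry _ _ _).symm.trans (E.arrowCongr (Equiv.refl Bool))
  have hT : ∀ c x, T c (E x) = c x.1 x.2 := fun c x => by simp [T, Function.uncurry]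
  rw [Pqd, ← T.sum_comp]
  refine sum_congr rfl fun c _ => ?_
  have hsum : ∑ j, (if T c j then (1 : ℂ) else 0) * ζ ^ (j : ℕ) =
      ∑ i, (numTrue (c i) : ℂ) * ζ ^ (e i : ℕ) := by
    rw [← E.sum_comp, Fintype.sum_prod_type]
    refine sum_congr rfl fun i _ => ?_
    simp only [hT, hE, hζ, numTrue, natCast_card_filter, sum_mul, ite_mul, one_mul, zero_mul]
  have hweight : bernWeight q (d * M) (T c) = ∏ i, bernWeight q M (c i) := by
    simp only [bernWeight_eq_prod, ← E.prod_comp, Fintype.prod_prod_type, hT]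
  rw [hsum, hweight]

theorem IsPrimitiveRoot.sum_mul_pow_eq_zero_iff {K : Type*} [Field K] [CharZero K] {p k : ℕ}
    (hp : p.Prime) {ζ : K} (hζ : IsPrimitiveRoot ζ (p ^ (k + 1)))
    (N : Fin (p ^ k) → Fin p → ℚ) :
    ∑ s, ∑ t, (N s t : K) * ζ ^ ((s : ℕ) + p ^ k * t) = 0 ↔
      ∀ s t t', N s t = N s t' := by
  have hgeom : ∑ t : Fin p, ζ ^ (p ^ k * t) = 0 := by
    have hω : IsPrimitiveRoot (ζ ^ p ^ k) p := hζ.pow (pow_pos hp.pos _) (pow_succ p k)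
    simpa [pow_mul, Fin.sum_univ_eq_sum_range] using hω.geom_sum_eq_zero hp.one_lt
  constructor
  · intro h
    obtain ⟨p', rfl⟩ : ∃ p', p = p' + 1 := ⟨p - 1, (Nat.succ_pred_eq_of_pos hp.pos).symm⟩
    -- `hgeom` eliminates the column `t = p - 1`; the remaining `p ^ k * (p - 1)` exponents are
    -- distinct and below the degree of the minimal polynomial `Φ_{p ^ (k + 1)}`.
    have hdeg : p' * (p' + 1) ^ k = (minpoly ℚ ζ).natDegree := by
      rw [← Polynomial.cyclotomic_eq_minpoly_rat hζ (pow_pos hp.pos _),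
        Polynomial.natDegree_cyclotomic, Nat.totient_prime_pow_succ hp, Nat.add_sub_cancel,
        mul_comm]
    let f : Fin ((p' + 1) ^ k) × Fin p' → Fin (minpoly ℚ ζ).natDegree :=
      finCongr hdeg ∘ finProdFinEquiv ∘ Prod.swap
    have hli := (linearIndependent_pow ζ).comp f
      ((finCongr hdeg).injective.comp (finProdFinEquiv.injective.comp Prod.swap_injective))
    let g : Fin ((p' + 1) ^ k) × Fin p' → ℚ := fun x =>
      N x.1 x.2.castSucc - N x.1 (Fin.last p')
    have hg : ∑ x, g x • ((fun i : Fin _ => ζ ^ (i : ℕ)) ∘ f) x = 0 := by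
      have hrow : ∀ s : Fin ((p' + 1) ^ k),
          ∑ t : Fin p', (g (s, t) : K) * ζ ^ ((s : ℕ) + (p' + 1) ^ k * t) =
            ∑ t, (N s t : K) * ζ ^ ((s : ℕ) + (p' + 1) ^ k * t) -
              (N s (Fin.last p') : K) * ζ ^ (s : ℕ) *
                ∑ t : Fin (p' + 1), ζ ^ ((p' + 1) ^ k * t) := by
        intro s
        simp only [g, Fin.sum_univ_castSucc, Rat.cast_sub, sub_mul, sum_sub_distrib, mul_add,
          mul_sum, Fin.val_castSucc, Fin.val_last, pow_add, mul_assoc]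
        ring
      simp only [Function.comp_apply, f, Rat.smul_def, Fintype.sum_prod_type]
      simp [hrow, hgeom, h]
    have hg0 := Fintype.linearIndependent_iff.mp hli g hg
    have hlast : ∀ s t, N s t = N s (Fin.last p') := fun s t => by
      induction t using Fin.lastCases with
      | last => rfl
      | cast t => simpa [g, sub_eq_zero] using hg0 (s, t)
    exact fun s t t' => (hlast s t).trans (hlast s t').symm
  · intro h
    refine Finset.sum_eq_zero fun s _ => ?_
    calc ∑ t, (N s t : K) * ζ ^ ((s : ℕ) + p ^ k * t)
        = (N s ⟨0, hp.pos⟩ : K) * ζ ^ (s : ℕ) * ∑ t : Fin p, ζ ^ (p ^ k * t) := by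
          rw [mul_sum]
          refine sum_congr rfl fun t _ => ?_
          rw [h s t ⟨0, hp.pos⟩, pow_add, mul_assoc]
      _ = 0 := by rw [hgeom, mul_zero]

lemma Pqd_prime_pow_mul_eq_pow (q : ℝ) {p : ℕ} (hp : p.Prime) (k M : ℕ) :
    Pqd q (p ^ (k + 1)) (p ^ (k + 1) * M) = (∑ g : Fin p → Fin M → Bool,
      if ∀ t t', numTrue (g t) = numTrue (g t') then ∏ t, bernWeight q M (g t) else 0) ^
        p ^ k := by
  let e : Fin (p ^ k) × Fin p ≃ Fin (p ^ (k + 1)) :=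
    (Equiv.prodComm _ _).trans (finProdFinEquiv.trans (finCongr (pow_succ' p k).symm))
  have he : ∀ x, (e x : ℕ) = x.1 + p ^ k * x.2 := fun x => by simp [e]
  have hζ := Complex.isPrimitiveRoot_exp (p ^ (k + 1)) (pow_ne_zero _ hp.ne_zero)
  refine (Pqd_mul_eq_sum_fold q _ M e).trans (Eq.trans ?_ (Fin.prod_const _ _))
  rw [← (Equiv.curry _ _ _).symm.sum_comp, Fintype.prod_sum]
  refine sum_congr rfl fun c _ => ?_
  have hcond := hζ.sum_mul_pow_eq_zero_iff hp fun s t => (numTrue (c s t) : ℚ)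
  simp only [Rat.cast_natCast, Nat.cast_inj] at hcond
  simp only [Fintype.sum_prod_type, Fintype.prod_prod_type, Equiv.curry_symm_apply,
    Function.uncurry_apply_pair, he, hcond, Fintype.prod_ite_zero]
  congr 1

theorem Pqd_prime_pow_general (q : ℝ) (n : ℕ)
    (p : ℕ) (hp : p.Prime) (m : ℕ) (hm : 1 ≤ m) (hpn : p ^ m ∣ n) :
    Pqd q (p ^ m) n =
      (∑ k ∈ Finset.range (n / p ^ m + 1), phi q k (n / p ^ m) ^ p) ^ (p ^ (m - 1)) := by
  obtain ⟨k, rfl⟩ : ∃ k, m = k + 1 := ⟨m - 1, by omega⟩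
  obtain ⟨M, rfl⟩ := hpn
  have hnumTrue : ∀ h : Fin M → Bool, numTrue h ∈ range (M + 1) := fun h =>
    mem_range_succ_iff.mpr ((numTrue_le h).trans_eq (Fintype.card_fin M))
  have : Nonempty (Fin p) := ⟨⟨0, hp.pos⟩⟩
  rw [Nat.mul_div_cancel_left M (pow_pos hp.pos _), Nat.add_sub_cancel,
    Pqd_prime_pow_mul_eq_pow q hp k M,
    sum_pi_ite_level_const_eq_sum_pow numTrue (bernWeight q M) _ hnumTrue]
  simp only [sum_bernWeight_numTrue_eq_phi, Fintype.card_fin]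

/-- Equation (4): for a prime power divisor p^m of n (m ≥ 1),
P_q(p^m, n) = (∑_{k=0}^{n/p^m} φ_q(k, n/p^m)^p)^{p^{m-1}}. -/
theorem Pqd_prime_pow (q : ℝ) (hq0 : 0 < q) (hq1 : q < 1) (n : ℕ) (hn : 0 < n)
    (p : ℕ) (hp : p.Prime) (m : ℕ) (hm : 1 ≤ m) (hpn : p ^ m ∣ n) :
    Pqd q (p ^ m) n =
      (∑ k ∈ Finset.range (n / p ^ m + 1), phi q k (n / p ^ m) ^ p) ^ (p ^ (m - 1)) :=
  Pqd_prime_pow_general q n p hp m hm hpn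
end

section
/- (de Moivre–Laplace near the mean with error O(1/n)) Let q ∈ (0,1) and c > 0 be fixed real numbers. There exist constants C > 0 and N > 0 such that for all integers n > N and all integers k with 0 ≤ k ≤ n and |k − nq| ≤ c, |φ_q(k,n) · √(2πnq(1−q)) − 1| ≤ C/n. -/
open Finset

open Real Filter Topology Stirling
open scoped Nat

/-!
Write `n = k + m` and let `ε j = log j! - (j log j - j + ½ log (2πj))` be the Stirling remainder,
so that `0 ≤ ε j ≤ 1/(12 j)` by Robbins' bound. Taking logarithms,
`log (φ_q(k,n) √(2πnq(1-q))) = ε n - ε k - ε m - ½ (log (k/nq) + log (m/n(1-q))) - D`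
with `D = k log (k/nq) + m log (m/n(1-q))` a relative entropy. When `|k - nq| ≤ c`, the `ε`-terms
are `O(1/n)`, each of the two logarithms is `O(c/n)`, and `0 ≤ D ≤ c²/(nq(1-q))` (the χ² bound).
Hence the logarithm is `O(1/n)`, and so is its exponential minus one.
-/

lemma log_stirlingSeq_le {n : ℕ} (hn : n ≠ 0) :
    log (stirlingSeq n) ≤ log √π + 1 / (12 * n) := by
  obtain ⟨n, rfl⟩ := Nat.exists_eq_add_one_of_ne_zero hn
  have hmono : Monotone fun j : ℕ ↦ log (stirlingSeq (j + 1)) - 1 / (12 * (j + 1 : ℕ)) := by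
    refine monotone_nat_of_le_succ fun j ↦ ?_
    have := log_stirlingSeq_sdiff_le (j + 1)
    have h : (1 : ℝ) / (12 * (j + 1 : ℕ) * ((j + 1 : ℕ) + 1)) =
        1 / (12 * (j + 1 : ℕ)) - 1 / (12 * (j + 1 + 1 : ℕ)) := by
      push_cast; field_simp; ring
    linarith
  have hlim : Tendsto (fun j : ℕ ↦ log (stirlingSeq (j + 1)) - 1 / (12 * (j + 1 : ℕ))) atTop
      (𝓝 (log √π - 0)) := by
    refine (((continuousAt_log (by positivity)).tendsto.comp
      tendsto_stirlingSeq_sqrt_pi).comp (tendsto_add_atTop_nat 1)).sub ?_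
    exact tendsto_const_nhds.div_atTop
      (tendsto_natCast_atTop_atTop.const_mul_atTop (by norm_num) |>.comp (tendsto_add_atTop_nat 1))
  have := hmono.ge_of_tendsto hlim n
  simp only [sub_zero] at this
  linarith

noncomputable def stirlingError (n : ℕ) : ℝ :=
  log (n ! : ℝ) - (n * log n - n + log n / 2 + log (2 * π) / 2)

lemma stirlingError_nonneg {n : ℕ} (hn : n ≠ 0) : 0 ≤ stirlingError n :=
  sub_nonneg.2 (le_log_factorial_stirling hn)

lemma stirlingError_eq_log_stirlingSeq_sub {n : ℕ} (hn : n ≠ 0) :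
    stirlingError n = log (stirlingSeq n) - log √π := by
  have hn' : (0 : ℝ) < n := by positivity
  rw [stirlingError, log_stirlingSeq_formula, log_mul two_ne_zero hn'.ne',
    log_div hn'.ne' (exp_ne_zero 1), log_exp, log_sqrt pi_pos.le, log_mul two_ne_zero pi_ne_zero]
  ring

lemma stirlingError_le {n : ℕ} (hn : n ≠ 0) : stirlingError n ≤ 1 / (12 * n) := by
  rw [stirlingError_eq_log_stirlingSeq_sub hn]
  linarith [log_stirlingSeq_le hn]

lemma abs_stirlingError_sub_le {k m n : ℕ} (hk : k ≠ 0) (hm : m ≠ 0) (hn : n ≠ 0) :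
    |stirlingError n - stirlingError k - stirlingError m| ≤
      1 / (12 * n) + 1 / (12 * k) + 1 / (12 * m) := by
  have := stirlingError_nonneg hk
  have := stirlingError_nonneg hm
  have := stirlingError_nonneg hn
  have := stirlingError_le hk
  have := stirlingError_le hm
  have := stirlingError_le hn
  rw [abs_le]
  constructor <;> linarith

lemma sub_le_mul_log_div {a x : ℝ} (ha : 0 < a) (hx : 0 < x) : x - a ≤ x * log (x / a) := by
  have h := one_sub_inv_le_log_of_pos (div_pos hx ha)
  rw [inv_div] at h
  calc x - a = x * (1 - a / x) := by field_simp
    _ ≤ x * log (x / a) := by gcongr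

lemma mul_log_div_le {a x : ℝ} (ha : 0 < a) (hx : 0 ≤ x) :
    x * log (x / a) ≤ x - a + (x - a) ^ 2 / a := by
  rcases hx.eq_or_lt with rfl | hx
  · simp [sq, ha.ne']
  calc x * log (x / a) ≤ x * (x / a - 1) := by gcongr; exact log_le_sub_one_of_pos (by positivity)
    _ = x - a + (x - a) ^ 2 / a := by field_simp; ring

lemma abs_log_div_le {a x : ℝ} (ha : 0 < a) (hx : a / 2 ≤ x) :
    |log (x / a)| ≤ 2 * |x - a| / a := by
  have hx0 : 0 < x := by linarith
  rw [abs_le]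
  constructor
  · have h1 : |x - a| / x ≤ 2 * |x - a| / a := by
      calc |x - a| / x ≤ |x - a| / (a / 2) := by gcongr
        _ = 2 * |x - a| / a := by field_simp
    calc -(2 * |x - a| / a) ≤ -(|x - a| / x) := neg_le_neg h1
      _ ≤ (x - a) / x := by rw [← neg_div]; gcongr; exact neg_abs_le _
      _ = 1 - (x / a)⁻¹ := by field_simp
      _ ≤ log (x / a) := one_sub_inv_le_log_of_pos (div_pos hx0 ha)
  · calc log (x / a) ≤ x / a - 1 := log_le_sub_one_of_pos (div_pos hx0 ha)
      _ = (x - a) / a := by field_simp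
      _ ≤ 2 * |x - a| / a := by gcongr; linarith [le_abs_self (x - a), abs_nonneg (x - a)]

lemma mul_log_div_add_mul_log_div_nonneg {a₁ a₂ x₁ x₂ : ℝ} (ha₁ : 0 < a₁) (ha₂ : 0 < a₂)
    (hx₁ : 0 < x₁) (hx₂ : 0 < x₂) (h : x₁ + x₂ = a₁ + a₂) :
    0 ≤ x₁ * log (x₁ / a₁) + x₂ * log (x₂ / a₂) := by
  linarith [sub_le_mul_log_div ha₁ hx₁, sub_le_mul_log_div ha₂ hx₂]

lemma mul_log_div_add_mul_log_div_le {a₁ a₂ x₁ x₂ : ℝ} (ha₁ : 0 < a₁) (ha₂ : 0 < a₂)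
    (hx₁ : 0 ≤ x₁) (hx₂ : 0 ≤ x₂) (h : x₁ + x₂ = a₁ + a₂) :
    x₁ * log (x₁ / a₁) + x₂ * log (x₂ / a₂) ≤ (x₁ - a₁) ^ 2 / a₁ + (x₂ - a₂) ^ 2 / a₂ := by
  linarith [mul_log_div_le ha₁ hx₁, mul_log_div_le ha₂ hx₂]

lemma phi_pos {q : ℝ} (hq0 : 0 < q) (hq1 : q < 1) {k n : ℕ} (hkn : k ≤ n) : 0 < phi q k n := by
  have := Nat.choose_pos hkn
  have := sub_pos.2 hq1
  unfold phi
  positivity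

lemma log_phi_mul_sqrt {q : ℝ} (hq0 : 0 < q) (hq1 : q < 1) {k m n : ℕ} (hk : k ≠ 0) (hm : m ≠ 0)
    (hn : k + m = n) :
    log (phi q k n * √(2 * π * n * q * (1 - q))) =
      stirlingError n - stirlingError k - stirlingError m
        - (log (k / (n * q)) + log (m / (n * (1 - q)))) / 2
        - (k * log (k / (n * q)) + m * log (m / (n * (1 - q)))) := by
  have hq1' : 0 < 1 - q := sub_pos.2 hq1
  have hk' : (k : ℝ) ≠ 0 := by positivity
  have hm' : (m : ℝ) ≠ 0 := by positivity
  have hn' : (n : ℝ) ≠ 0 := by subst hn; positivity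
  have hmn : n - k = m := by omega
  have hnr : (n : ℝ) = k + m := by exact_mod_cast hn.symm
  have hX : 0 < 2 * π * n * q * (1 - q) := by positivity
  rw [phi, Nat.cast_choose ℝ (hn ▸ Nat.le_add_right k m), hmn]
  simp only [stirlingError, log_mul, log_div, log_pow, log_sqrt hX.le, ne_eq, mul_eq_zero,
    div_eq_zero_iff, Nat.cast_eq_zero, Nat.factorial_ne_zero, hk', hm', hn', (pow_pos hq0 k).ne',
    (pow_pos hq1' m).ne', hq0.ne', hq1'.ne', pi_ne_zero, (sqrt_pos.2 hX).ne', OfNat.ofNat_ne_zero,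
    or_self, not_false_eq_true]
  linear_combination (log n - 1) * hnr

lemma abs_sub_add_div_two_sub_le (s l₁ l₂ d : ℝ) :
    |s - (l₁ + l₂) / 2 - d| ≤ |s| + (|l₁| + |l₂|) / 2 + |d| := by
  refine (abs_sub _ _).trans (add_le_add_left ((abs_sub _ _).trans (add_le_add_right ?_ _)) _)
  rw [abs_div, abs_two]
  gcongr
  exact abs_add_le _ _

lemma abs_log_phi_mul_sqrt_le_of_abs_sub_le {q c : ℝ} (hq0 : 0 < q) (hq1 : q < 1) (hc : 0 < c)
    {k n : ℕ} (hkn : k ≤ n) (hu : |(k : ℝ) - n * q| ≤ c) (hcq : 2 * c ≤ n * q)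
    (hcq' : 2 * c ≤ n * (1 - q)) :
    |log (phi q k n * √(2 * π * n * q * (1 - q)))| ≤
      1 / (12 * n) + (1 / 6 + c + c ^ 2) * (1 / (n * q) + 1 / (n * (1 - q))) := by
  have hq1' : 0 < 1 - q := sub_pos.2 hq1
  obtain ⟨m, rfl⟩ := Nat.exists_eq_add_of_le hkn
  have hnr : ((k + m : ℕ) : ℝ) = k + m := by push_cast; ring
  set n := k + m
  have hu' : |(m : ℝ) - n * (1 - q)| ≤ c := by
    rw [← abs_neg]; convert hu using 2; rw [hnr]; ring
  have ha₁ : 0 < (n : ℝ) * q := by linarith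
  have ha₂ : 0 < (n : ℝ) * (1 - q) := by linarith
  have hk₁ : (n : ℝ) * q / 2 ≤ k := by linarith [(abs_le.1 hu).1]
  have hm₁ : (n : ℝ) * (1 - q) / 2 ≤ m := by linarith [(abs_le.1 hu').1]
  have hk0 : k ≠ 0 := by rintro rfl; simp at hk₁; linarith
  have hm0 : m ≠ 0 := by rintro rfl; simp at hm₁; linarith
  rw [log_phi_mul_sqrt hq0 hq1 hk0 hm0 rfl]
  have hS := abs_stirlingError_sub_le hk0 hm0 (by omega : n ≠ 0)
  have hSk : 1 / (12 * (k : ℝ)) ≤ 1 / 6 * (1 / (n * q)) := by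
    rw [one_div_mul_one_div]; exact one_div_le_one_div_of_le (by positivity) (by linarith)
  have hSm : 1 / (12 * (m : ℝ)) ≤ 1 / 6 * (1 / (n * (1 - q))) := by
    rw [one_div_mul_one_div]; exact one_div_le_one_div_of_le (by positivity) (by linarith)
  have hLk : |log (k / (n * q))| ≤ 2 * c * (1 / (n * q)) := by
    grw [abs_log_div_le ha₁ hk₁, hu]; rw [mul_one_div]
  have hLm : |log (m / (n * (1 - q)))| ≤ 2 * c * (1 / (n * (1 - q))) := by
    grw [abs_log_div_le ha₂ hm₁, hu']; rw [mul_one_div]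
  have hsum : (k : ℝ) + m = n * q + n * (1 - q) := by rw [hnr]; ring
  have hD₀ := mul_log_div_add_mul_log_div_nonneg ha₁ ha₂ (by positivity) (by positivity) hsum
  have hD₁ := mul_log_div_add_mul_log_div_le ha₁ ha₂ (by positivity) (by positivity) hsum
  have hsq₁ : ((k : ℝ) - n * q) ^ 2 / (n * q) ≤ c ^ 2 * (1 / (n * q)) := by
    rw [mul_one_div]
    exact div_le_div_of_nonneg_right (sq_le_sq' (abs_le.1 hu).1 (abs_le.1 hu).2) ha₁.le
  have hsq₂ : ((m : ℝ) - n * (1 - q)) ^ 2 / (n * (1 - q)) ≤ c ^ 2 * (1 / (n * (1 - q))) := by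
    rw [mul_one_div]
    exact div_le_div_of_nonneg_right (sq_le_sq' (abs_le.1 hu').1 (abs_le.1 hu').2) ha₂.le
  grw [abs_sub_add_div_two_sub_le, abs_of_nonneg hD₀]
  linarith

lemma abs_log_phi_mul_sqrt_le {q c : ℝ} (hq0 : 0 < q) (hq1 : q < 1) (hc : 0 < c) {k n : ℕ}
    (hkn : k ≤ n) (hu : |(k : ℝ) - n * q| ≤ c) (hcq : 2 * c ≤ n * q) (hcq' : 2 * c ≤ n * (1 - q)) :
    |log (phi q k n * √(2 * π * n * q * (1 - q)))| ≤ (1 + c) ^ 2 / (q * (1 - q) * n) := by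
  have hq1' : 0 < 1 - q := sub_pos.2 hq1
  have hn : (0 : ℝ) < n := pos_of_mul_pos_left (by linarith : (0 : ℝ) < n * q) hq0.le
  have hinv : 1 / ((n : ℝ) * q) + 1 / (n * (1 - q)) = 1 / (q * (1 - q) * n) := by
    field_simp; ring
  have hn₁ : 1 / (12 * (n : ℝ)) ≤ 1 / 48 * (1 / (q * (1 - q) * n)) := by
    rw [one_div_mul_one_div]
    exact one_div_le_one_div_of_le (by positivity) (by nlinarith [sq_nonneg (2 * q - 1)])
  grw [abs_log_phi_mul_sqrt_le_of_abs_sub_le hq0 hq1 hc hkn hu hcq hcq', hinv, hn₁,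
    div_eq_mul_one_div ((1 + c) ^ 2)]
  rw [← add_mul]
  gcongr
  nlinarith

/-- Lemma 4.1 (de Moivre–Laplace, second part): uniformly over |k − nq| ≤ c,
φ_q(k,n) = (2πnq(1−q))^{-1/2} (1 + O(1/n)). -/
theorem deMoivreLaplace_center (q c : ℝ) (hq0 : 0 < q) (hq1 : q < 1) (hc : 0 < c) :
    ∃ C > (0 : ℝ), ∃ N : ℕ, ∀ n : ℕ, n > N → ∀ k : ℕ, k ≤ n →
      |(k : ℝ) - n * q| ≤ c →
      |phi q k n * Real.sqrt (2 * Real.pi * n * q * (1 - q)) - 1| ≤ C / n := by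
  have hq1' : 0 < 1 - q := sub_pos.2 hq1
  set C₀ := (1 + c) ^ 2 / (q * (1 - q)) with hC₀
  have hC₀q : c ≤ C₀ * q := by
    rw [hC₀, div_mul_eq_mul_div, le_div_iff₀ (by positivity)]
    nlinarith [mul_pos hq0 (show 0 < 1 + c + c ^ 2 + c * q by positivity)]
  have hC₀q' : c ≤ C₀ * (1 - q) := by
    rw [hC₀, div_mul_eq_mul_div, le_div_iff₀ (by positivity)]
    nlinarith [mul_pos hq1' (show 0 < 1 + c + c ^ 2 + c * (1 - q) by positivity)]
  refine ⟨2 * C₀, by positivity, ⌈2 * C₀⌉₊, fun n hn k hkn hu => ?_⟩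
  have hnC₀ : 2 * C₀ < n := Nat.lt_of_ceil_lt hn
  have hn0 : (0 : ℝ) < n := by linarith [show 0 < C₀ by positivity]
  have hE := abs_log_phi_mul_sqrt_le hq0 hq1 hc hkn hu (by nlinarith) (by nlinarith)
  rw [← div_div, ← hC₀] at hE
  have hpos : 0 < phi q k n * √(2 * π * n * q * (1 - q)) := by
    have := phi_pos hq0 hq1 hkn
    positivity
  rw [← exp_log hpos]
  calc _ ≤ 2 * |log (phi q k n * √(2 * π * n * q * (1 - q)))| :=
        abs_exp_sub_one_le (hE.trans ((div_le_one hn0).2 (by linarith)))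
    _ ≤ 2 * C₀ / n := by rw [mul_div_assoc]; gcongr
end
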